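/- arXiv:1105.0557 — 5 statements merged into one kernel-verified Lean document; each statement's English description precedes it below -/
import Mathlib

section
/- Let (X,d) be a locally compact metric space and let {g_i} be a net in Iso(X) such that {g_i x} is a Cauchy net in X for some x ∈ X. Then there exists a point y ∈ X such that g_i x → y. -/
/-!
Pick `ε > 0` with `closedBall x ε` compact. Each isometry `g i` carries it onto the compact
ball `closedBall (g i x) ε`, so every point of the orbit has a compact `ε`-ball. A Cauchy net
eventually stays in the `ε`-ball around one of its own points, hence in a compact set, which
is complete, so the net converges.
-/

open Filter Topology Metric

section PseudoMetric

variable {X : Type*} [PseudoMetricSpace X] {F : Filter X} {s : Set X} {ε : ℝ}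

theorem Cauchy.exists_ball_mem_of_mem (hF : Cauchy F) (hs : s ∈ F) (hε : 0 < ε) :
    ∃ y ∈ s, ball y ε ∈ F := by
  obtain ⟨hne, hsmall⟩ := Metric.cauchy_iff.mp hF
  obtain ⟨t, ht, ht_small⟩ := hsmall ε hε
  obtain ⟨y, hys, hyt⟩ := Filter.nonempty_of_mem (inter_mem hs ht)
  exact ⟨y, hys, mem_of_superset ht fun z hz => ht_small z hz y hyt⟩

theorem Cauchy.exists_le_nhds_of_isCompact_closedBall (hF : Cauchy F) (hs : s ∈ F)
    (hε : 0 < ε) (hcompact : ∀ y ∈ s, IsCompact (closedBall y ε)) : ∃ z, F ≤ 𝓝 z := by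
  obtain ⟨y, hys, hball⟩ := hF.exists_ball_mem_of_mem hs hε
  obtain ⟨z, -, hz⟩ := (hcompact y hys).isComplete F hF
    (le_principal_iff.2 (mem_of_superset hball ball_subset_closedBall))
  exact ⟨z, hz⟩

end PseudoMetric

theorem exists_limit_of_cauchy_net_of_locallyCompact_general
    {X : Type*} [MetricSpace X] [LocallyCompactSpace X]
    {ι : Type*} [Preorder ι]
    (g : ι → X ≃ᵢ X) (x : X)
    (hx : Cauchy (Filter.map (fun i => g i x) Filter.atTop)) :
    ∃ y : X, Filter.Tendsto (fun i => g i x) Filter.atTop (𝓝 y) := by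
  obtain ⟨ε, hε, hcompact⟩ := exists_isCompact_closedBall x
  have hcompact_orbit : ∀ y ∈ Set.range fun i => g i x, IsCompact (closedBall y ε) := by
    rintro _ ⟨i, rfl⟩
    rw [← (g i).image_closedBall]
    exact hcompact.image (g i).continuous
  exact hx.exists_le_nhds_of_isCompact_closedBall range_mem_map hε hcompact_orbit

/-- If `(X,d)` is a locally compact metric space and `(g_i)` is a net in `Iso(X)` such
that `(g_i x)` is a Cauchy net in `X` for some `x ∈ X`, then there exists `y ∈ X` with
`g_i x → y`. -/
theorem exists_limit_of_cauchy_net_of_locallyCompact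
    {X : Type*} [MetricSpace X] [LocallyCompactSpace X]
    {ι : Type*} [Nonempty ι] [Preorder ι] [IsDirected ι (· ≤ ·)]
    (g : ι → X ≃ᵢ X) (x : X)
    (hx : Cauchy (Filter.map (fun i => g i x) Filter.atTop)) :
    ∃ y : X, Filter.Tendsto (fun i => g i x) Filter.atTop (𝓝 y) :=
  exists_limit_of_cauchy_net_of_locallyCompact_general g x hx
end

section
/- Let (X,d) be a locally compact metric space. The natural evaluation action (Iso(X),X) is proper if and only if it is Cauchy-indivisible. -/
open Filter Topology Set UniformSpace

noncomputable section

/-- The topology of pointwise convergence on the group of surjective isometries of `X`. -/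
instance isoPointwiseTopology (X : Type*) [MetricSpace X] : TopologicalSpace (X ≃ᵢ X) :=
  TopologicalSpace.induced (fun g => (g : X → X)) Pi.topologicalSpace

/-- A net `g` diverges (`g_i → ∞`), i.e. it has no convergent subnet; equivalently,
no cluster point. -/
def DivergentNet {G : Type*} [TopologicalSpace G] {ι : Type*} [Preorder ι]
    (g : ι → G) : Prop :=
  ∀ h : G, ¬ MapClusterPt h atTop g

/-- A sequence `g` diverges (`g_n → ∞`), i.e. it has no convergent subsequence. -/
def DivergentSeq {G : Type*} [TopologicalSpace G] (g : ℕ → G) : Prop :=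
  ∀ φ : ℕ → ℕ, StrictMono φ → ∀ h : G, ¬ Tendsto (g ∘ φ) atTop (𝓝 h)

/-- The natural evaluation action of `Iso(X)` on `X` is Cauchy-indivisible: whenever a
net `g` in `Iso(X)` has no convergent subnet and `(g_i x)` is a Cauchy net for some
`x`, then `(g_i y)` is a Cauchy net for every `y`. -/
def IsoCauchyIndivisible (X : Type*) [MetricSpace X] : Prop :=
  ∀ (ι : Type*) [Nonempty ι] [Preorder ι] [IsDirected ι (· ≤ ·)],
    ∀ g : ι → X ≃ᵢ X, DivergentNet g →
      (∃ x : X, Cauchy (map (fun i => g i x) atTop)) →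
      ∀ y : X, Cauchy (map (fun i => g i y) atTop)

/-- Properness of the isometric evaluation action, expressed through emptiness of all
limit sets `L(x)`: no net in `Iso(X)` without convergent subnet has `(g_i x)`
converging in `X`. -/
def IsoProperLimits (X : Type*) [MetricSpace X] : Prop :=
  ∀ (ι : Type*) [Nonempty ι] [Preorder ι] [IsDirected ι (· ≤ ·)],
    ∀ g : ι → X ≃ᵢ X, DivergentNet g →
      ∀ x y : X, ¬ Tendsto (fun i => g i x) atTop (𝓝 y)

/-- The canonical lift `ĝ` of an isometry of `X` to the completion `X̂`. -/
def hatIso {X : Type*} [MetricSpace X] (g : X ≃ᵢ X) : Completion X → Completion X :=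
  Completion.map (g : X → X)

/-- The lifted group `{ĝ : g ∈ Iso(X)}` inside the selfmaps of `X̂`. -/
def hatIsoSet (X : Type*) [MetricSpace X] : Set (Completion X → Completion X) :=
  Set.range (hatIso (X := X))

/-- The Ellis semigroup `E`: the closure of the lifted group `{ĝ}` in the topology of
pointwise convergence on selfmaps of `X̂`. -/
def Ellis (X : Type*) [MetricSpace X] : Set (Completion X → Completion X) :=
  closure (hatIsoSet X)

/-- The set `H` of pointwise limits on `X̂` of divergent sequences of lifted isometries. -/
def Hset (X : Type*) [MetricSpace X] : Set (Completion X → Completion X) :=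
  { h | Continuous h ∧ ∃ g : ℕ → X ≃ᵢ X, DivergentSeq g ∧
      Tendsto (fun n => hatIso (g n)) atTop (𝓝 h) }

/-- The set `X_l ⊆ X̂` of limit points of the action `(Iso(X), X)` in the completion. -/
def Xl (X : Type*) [MetricSpace X] : Set (Completion X) :=
  { y | ∃ (g : ℕ → X ≃ᵢ X) (x : X), DivergentSeq g ∧
      CauchySeq (fun n => g n x) ∧
      Tendsto (fun n => ((g n x : X) : Completion X)) atTop (𝓝 y) }

/-- The set `X_p ⊆ X̂` of special limit points of the action `(Iso(X), X)`. -/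
def Xp (X : Type*) [MetricSpace X] : Set (Completion X) :=
  { y | ∃ (g : ℕ → X ≃ᵢ X) (x : X), DivergentSeq g ∧
      CauchySeq (fun n => g n x) ∧ CauchySeq (fun n => (g n).symm x) ∧
      Tendsto (fun n => ((g n x : X) : Completion X)) atTop (𝓝 y) }

/-- `X ∪ X_l`, with `X` identified with its image in the completion `X̂`. -/
def XcupXl (X : Type*) [MetricSpace X] : Set (Completion X) :=
  Set.range ((↑) : X → Completion X) ∪ Xl X

/-- `X ∪ X_p`, with `X` identified with its image in the completion `X̂`. -/
def XcupXp (X : Type*) [MetricSpace X] : Set (Completion X) :=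
  Set.range ((↑) : X → Completion X) ∪ Xp X

/-- The Ellis semigroup is a group: every element has a two-sided inverse in `E`
(under composition). -/
def EllisIsGroup (X : Type*) [MetricSpace X] : Prop :=
  ∀ f ∈ Ellis X, ∃ g ∈ Ellis X, f ∘ g = id ∧ g ∘ f = id

/-!
Surjective isometries carry a compact ball `closedBall x r` onto `closedBall (g x) r`, so all
points of an orbit have compact balls of one common radius, and a Cauchy filter meeting an
orbit converges. Hence a divergent net with a Cauchy orbit would have a convergent orbit, which
properness forbids: a proper action is Cauchy-indivisible.

Conversely, properness is tested on ultrafilters `𝒢` on `Iso(X)` with `g x → y`. Any sequence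
`gₙ` with `gₙ x` in a compact neighbourhood of `y` has a subsequence along which `gₙ x` is
Cauchy; a further subsequence either diverges, and then `gₙ w` is Cauchy by
Cauchy-indivisibility, or clusters at some `k`, and then `gₙ w` has a subsequence converging to
`k w`. So the `w`-orbit of a `𝒢`-large set is totally bounded and `g w` converges along `𝒢` for
every `w`. The same holds for `g⁻¹`, and the two pointwise limits are mutually inverse
isometries: `𝒢` converges.
-/

theorem totallyBounded_of_forall_exists_cauchySeq {α : Type*} [UniformSpace α] {s : Set α}
    (h : ∀ u : ℕ → α, (∀ n, u n ∈ s) → ∃ φ : ℕ → ℕ, StrictMono φ ∧ CauchySeq (u ∘ φ)) :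
    TotallyBounded s := by
  intro V hV
  by_contra hcover
  obtain ⟨u, hus, hsep⟩ :
      ∃ u : ℕ → α, (∀ n, u n ∈ s) ∧ ∀ n m, m < n → u m ∉ ball (u n) V := by
    simp only [not_exists, not_and, not_subset, mem_iUnion₂, exists_prop] at hcover
    simpa only [forall_and, forall_mem_image, not_and] using!
      seq_of_forall_finite_exists hcover
  obtain ⟨φ, hφ, hcauchy⟩ := h u hus
  obtain ⟨N, hN⟩ := hcauchy.mem_entourage hV
  exact hsep (φ (N + 1)) (φ N) (hφ N.lt_add_one) (hN (N + 1) N N.le_succ le_rfl)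

namespace IsometryEquiv

variable {α X Y : Type*} [PseudoMetricSpace X] [PseudoMetricSpace Y] {l : Filter α}

theorem tendsto_symm_apply_iff {g : α → X ≃ᵢ Y} {a : X} {b : Y} :
    Tendsto (fun i => (g i).symm b) l (𝓝 a) ↔ Tendsto (fun i => g i a) l (𝓝 b) := by
  have hdist (i : α) : dist ((g i).symm b) a = dist (g i a) b := by
    rw [← (g i).dist_eq, apply_symm_apply, dist_comm]
  rw [tendsto_iff_dist_tendsto_zero, funext hdist, ← tendsto_iff_dist_tendsto_zero]

theorem tendsto_apply_iff_of_tendsto {g : α → X ≃ᵢ Y} {x : α → X} {a : X} {b : Y}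
    (hx : Tendsto x l (𝓝 a)) :
    Tendsto (fun i => g i (x i)) l (𝓝 b) ↔ Tendsto (fun i => g i a) l (𝓝 b) :=
  tendsto_iff_of_dist <| by
    simpa only [IsometryEquiv.dist_eq] using tendsto_iff_dist_tendsto_zero.1 hx

end IsometryEquiv

section Orbits

variable {X : Type*} [PseudoMetricSpace X] [WeaklyLocallyCompactSpace X]

theorem exists_pos_isCompact_closedBall_orbit (x : X) :
    ∃ r > 0, ∀ g : X ≃ᵢ X, IsCompact (Metric.closedBall (g x) r) := by
  obtain ⟨r, hr, hcompact⟩ := Metric.exists_isCompact_closedBall x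
  exact ⟨r, hr, fun g => g.image_closedBall x r ▸ hcompact.image g.continuous⟩

theorem exists_le_nhds_of_cauchy_of_orbit_mem (x : X) {f : Filter X} (hf : Cauchy f)
    (horbit : range (fun g : X ≃ᵢ X => g x) ∈ f) : ∃ y, f ≤ 𝓝 y := by
  obtain ⟨r, hr, hcompact⟩ := exists_pos_isCompact_closedBall_orbit x
  obtain ⟨t, htf, ht⟩ := (Metric.cauchy_iff.1 hf).2 r hr
  obtain ⟨-, hzt, g, rfl⟩ := hf.1.nonempty_of_mem (inter_mem htf horbit)
  have hball : t ⊆ Metric.closedBall (g x) r := fun y hy => (ht y hy _ hzt).le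
  obtain ⟨y, -, hy⟩ :=
    (hcompact g).isComplete f hf (le_principal_iff.2 (mem_of_superset htf hball))
  exact ⟨y, hy⟩

end Orbits

section PointwiseTopology

variable {X : Type*} [MetricSpace X]

theorem IsometryEquiv.tendsto_nhds_iff_forall_tendsto_apply {α : Type*} {l : Filter α}
    {g : α → X ≃ᵢ X} {h : X ≃ᵢ X} :
    Tendsto g l (𝓝 h) ↔ ∀ w : X, Tendsto (fun i => g i w) l (𝓝 (h w)) := by
  rw [(IsInducing.induced (fun g : X ≃ᵢ X => (g : X → X))).tendsto_nhds_iff]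
  exact tendsto_pi_nhds

theorem IsometryEquiv.continuous_eval_const (w : X) : Continuous fun g : X ≃ᵢ X => g w :=
  (continuous_apply w).comp continuous_induced_dom

theorem IsometryEquiv.continuous_eval : Continuous fun p : (X ≃ᵢ X) × X => p.1 p.2 :=
  continuous_iff_continuousAt.2 fun p => (tendsto_apply_iff_of_tendsto continuousAt_snd).2
    ((continuous_eval_const p.2).comp continuous_fst).continuousAt

theorem exists_isometryEquiv_le_nhds {l : Filter (X ≃ᵢ X)} [l.NeBot] {F F' : X → X}
    (hF : ∀ w, Tendsto (fun g : X ≃ᵢ X => g w) l (𝓝 (F w)))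
    (hF' : ∀ w, Tendsto (fun g : X ≃ᵢ X => g.symm w) l (𝓝 (F' w))) :
    ∃ H : X ≃ᵢ X, l ≤ 𝓝 H := by
  have hiso : Isometry F := Isometry.of_dist_eq fun a b =>
    tendsto_nhds_unique ((hF a).dist (hF b))
      (by simp only [IsometryEquiv.dist_eq, tendsto_const_nhds])
  have hinv : Function.RightInverse F' F := fun w =>
    tendsto_nhds_unique (hF (F' w)) (IsometryEquiv.tendsto_symm_apply_iff.1 (hF' w))
  let H : X ≃ᵢ X :=
    { Equiv.ofBijective F ⟨hiso.injective, hinv.surjective⟩ with isometry_toFun := hiso }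
  exact ⟨H, IsometryEquiv.tendsto_nhds_iff_forall_tendsto_apply.2 hF⟩

end PointwiseTopology

universe u v

namespace IsoCauchyIndivisible

variable {X : Type u} [MetricSpace X]

theorem cauchySeq_apply (hCI : IsoCauchyIndivisible.{u, v} X) {g : ℕ → X ≃ᵢ X}
    (hg : DivergentNet g) {x : X} (hx : CauchySeq fun n => g n x) (y : X) :
    CauchySeq fun n => g n y := by
  -- Cauchy-indivisibility quantifies over index types of one fixed universe only.
  have hdown : map ULift.down (atTop : Filter (ULift.{v} ℕ)) = atTop :=
    (ULift.orderIso.{v} (α := ℕ)).map_atTop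
  have hlift {β : Type u} (f : ℕ → β) :
      map (fun i : ULift.{v} ℕ => f i.down) atTop = map f atTop := by
    rw [← hdown, map_map]; rfl
  have hdiv : DivergentNet fun i : ULift.{v} ℕ => g i.down := fun h hh =>
    hg h (by rw [MapClusterPt, ← hlift]; exact hh)
  have hy :=
    hCI (ULift.{v} ℕ) (fun i => g i.down) hdiv ⟨x, (hlift fun n => g n x).symm ▸ hx⟩ y
  rwa [CauchySeq, ← hlift]

theorem exists_cauchySeq_apply_subseq (hCI : IsoCauchyIndivisible.{u, v} X) {g : ℕ → X ≃ᵢ X}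
    {x : X} (hx : CauchySeq fun n => g n x) (w : X) :
    ∃ φ : ℕ → ℕ, StrictMono φ ∧ CauchySeq fun n => g (φ n) w := by
  by_cases hg : DivergentNet g
  · exact ⟨id, strictMono_id, hCI.cauchySeq_apply hg hx w⟩
  · obtain ⟨k, hk⟩ := not_forall_not.1 hg
    obtain ⟨φ, hφ, hlim⟩ :=
      (hk.continuousAt_comp (IsometryEquiv.continuous_eval_const w).continuousAt).tendsto_subseq
    exact ⟨φ, hφ, hlim.cauchySeq⟩

theorem totallyBounded_image_apply (hCI : IsoCauchyIndivisible.{u, v} X) {K : Set X}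
    (hK : IsCompact K) (x w : X) :
    TotallyBounded ((fun g : X ≃ᵢ X => g w) '' {g | g x ∈ K}) := by
  refine totallyBounded_of_forall_exists_cauchySeq fun u hu => ?_
  choose g hgK hgu using hu
  obtain rfl : u = fun n => g n w := funext fun n => (hgu n).symm
  obtain ⟨_, -, φ, hφ, hlim⟩ := hK.tendsto_subseq (x := fun n => g n x) hgK
  obtain ⟨ψ, hψ, hcauchy⟩ :=
    hCI.exists_cauchySeq_apply_subseq (g := g ∘ φ) hlim.cauchySeq w
  exact ⟨φ ∘ ψ, hφ.comp hψ, hcauchy⟩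

variable [LocallyCompactSpace X]

theorem exists_tendsto_apply (hCI : IsoCauchyIndivisible.{u, v} X) (𝒢 : Ultrafilter (X ≃ᵢ X))
    {x y : X} (hxy : Tendsto (fun g : X ≃ᵢ X => g x) 𝒢 (𝓝 y)) (w : X) :
    ∃ z, Tendsto (fun g : X ≃ᵢ X => g w) 𝒢 (𝓝 z) := by
  obtain ⟨K, hK, hKy⟩ := exists_compact_mem_nhds y
  have hcauchy : Cauchy (map (fun g : X ≃ᵢ X => g w) 𝒢) :=
    totallyBounded_iff_ultrafilter.1 (hCI.totallyBounded_image_apply hK x w) (𝒢.map _)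
      (le_principal_iff.2 (image_mem_map (hxy hKy)))
  exact exists_le_nhds_of_cauchy_of_orbit_mem w hcauchy range_mem_map

theorem exists_le_nhds_of_tendsto_apply (hCI : IsoCauchyIndivisible.{u, v} X)
    (𝒢 : Ultrafilter (X ≃ᵢ X)) {x y : X} (hxy : Tendsto (fun g : X ≃ᵢ X => g x) 𝒢 (𝓝 y)) :
    ∃ H : X ≃ᵢ X, ↑𝒢 ≤ 𝓝 H := by
  choose F hF using hCI.exists_tendsto_apply 𝒢 hxy
  have hyx : Tendsto (fun g : X ≃ᵢ X => g y) (𝒢.map IsometryEquiv.symm) (𝓝 x) := by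
    rw [Ultrafilter.coe_map, tendsto_map'_iff]
    exact IsometryEquiv.tendsto_symm_apply_iff.2 hxy
  choose F' hF' using hCI.exists_tendsto_apply _ hyx
  simp only [Ultrafilter.coe_map, tendsto_map'_iff] at hF'
  exact exists_isometryEquiv_le_nhds hF hF'

theorem isProperMap (hCI : IsoCauchyIndivisible.{u, v} X) :
    IsProperMap fun p : (X ≃ᵢ X) × X => (p.2, p.1 p.2) := by
  refine isProperMap_iff_ultrafilter_of_t2.2
    ⟨continuous_snd.prodMk IsometryEquiv.continuous_eval, fun 𝒰 q hq => ?_⟩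
  have hx : Tendsto (fun p : (X ≃ᵢ X) × X => p.2) 𝒰 (𝓝 q.1) :=
    (continuous_fst.tendsto q).comp hq
  have hgx : Tendsto (fun p : (X ≃ᵢ X) × X => p.1 q.1) 𝒰 (𝓝 q.2) :=
    (IsometryEquiv.tendsto_apply_iff_of_tendsto hx).1 ((continuous_snd.tendsto q).comp hq)
  obtain ⟨H, hH⟩ := hCI.exists_le_nhds_of_tendsto_apply (𝒰.map Prod.fst) (tendsto_map'_iff.2 hgx)
  rw [Ultrafilter.coe_map] at hH
  exact ⟨(H, q.1), Tendsto.prodMk_nhds hH hx⟩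

end IsoCauchyIndivisible

theorem IsProperMap.isoProperLimits {X : Type*} [MetricSpace X]
    (h : IsProperMap fun p : (X ≃ᵢ X) × X => (p.2, p.1 p.2)) : IsoProperLimits X := by
  intro ι _ _ _ g hg x y hxy
  have hcluster : MapClusterPt (x, y) (map (fun i => (g i, x)) atTop)
      (fun p : (X ≃ᵢ X) × X => (p.2, p.1 p.2)) := by
    rw [MapClusterPt, map_map]
    exact (tendsto_const_nhds.prodMk_nhds hxy).mapClusterPt
  obtain ⟨q, -, hq⟩ := h.clusterPt_of_mapClusterPt hcluster
  have hcluster_fst := hq.map continuousAt_fst tendsto_map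
  rw [map_map] at hcluster_fst
  exact hg q.1 hcluster_fst

theorem IsoProperLimits.isoCauchyIndivisible {X : Type u} [MetricSpace X]
    [LocallyCompactSpace X] (h : IsoProperLimits.{u, v} X) : IsoCauchyIndivisible.{u, v} X := by
  intro ι _ _ _ g hg ⟨x, hx⟩ _
  obtain ⟨y, hy⟩ := exists_le_nhds_of_cauchy_of_orbit_mem x hx
    (mem_of_superset range_mem_map (range_comp_subset_range g fun h : X ≃ᵢ X => h x))
  exact absurd hy (h ι g hg x y)

/-- On a locally compact metric space, the evaluation action of `Iso(X)` on `X` is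
proper (in Bourbaki's sense) if and only if it is Cauchy-indivisible. -/
theorem isoProper_iff_isoCauchyIndivisible
    (X : Type*) [MetricSpace X] [LocallyCompactSpace X] :
    IsProperMap (fun p : (X ≃ᵢ X) × X => (p.2, p.1 p.2)) ↔ IsoCauchyIndivisible X :=
  ⟨fun h => h.isoProperLimits.isoCauchyIndivisible, IsoCauchyIndivisible.isProperMap⟩

end
end

section
/- Let (X,d) be a metric space such that the action (Iso(X),X) is Cauchy-indivisible. Then the following are equivalent: (i) the action (Iso(X),X) is proper; (ii) for every h in the pointwise closure of the lifted group {ĝ : g ∈ Iso(X)} in C(X̂,X̂), either h(X) ⊆ X or h(X) ⊆ X̂ \ X. -/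
/-!
(i) ⇒ (ii): if `h ∈ E` sent one point of `X` into `X` and another one outside `X`, approximating
`h` at these two points by isometries would give a sequence `g_n` converging at the first point
in `X` which has no cluster point in `Iso(X)`, because its orbit of the second point escapes `X`.

(ii) ⇒ (i): if a net `g_i` without cluster point has `g_i x → y ∈ X`, Cauchy-indivisibility
makes every orbit Cauchy, so the lifts `ĝ_i` converge pointwise to some `h ∈ E` with
`h x = y ∈ X`; by (ii) the `g_i` converge pointwise on `X`. The same applies to the `g_i⁻¹`, and
the two limits are mutually inverse isometries, so `g_i` converges in `Iso(X)`. Since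
Cauchy-indivisibility only speaks of nets indexed in one fixed universe, this is run on
sequences, where it shows that every fibre `{k | k x = y}` is compact; a compactness argument
then handles nets of arbitrary index type.
-/

open Filter Topology Set UniformSpace

noncomputable section

universe u v w

def EllisDichotomy (X : Type*) [MetricSpace X] : Prop :=
  ∀ h ∈ Ellis X,
    (∀ x : X, h (x : Completion X) ∈ Set.range ((↑) : X → Completion X)) ∨
    (∀ x : X, h (x : Completion X) ∉ Set.range ((↑) : X → Completion X))

theorem MapClusterPt.eq_of_tendsto {α Y : Type*} [TopologicalSpace Y] [T2Space Y]
    {l : Filter α} {u : α → Y} {a b : Y} (ha : MapClusterPt a l u) (hb : Tendsto u l (𝓝 b)) :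
    a = b :=
  eq_of_nhds_neBot (ha.clusterPt.mono hb)

theorem tendsto_uliftDown_atTop : Tendsto (ULift.down : ULift.{u} ℕ → ℕ) atTop atTop :=
  tendsto_atTop_atTop_of_monotone (fun _ _ h => h) fun n => ⟨⟨n⟩, le_rfl⟩

theorem cauchy_map_apply_of_denseRange {ι α β γ : Type*} [PseudoMetricSpace α]
    [PseudoMetricSpace β] {l : Filter ι} [l.NeBot] {f : ι → α → β}
    (hf : ∀ i, LipschitzWith 1 (f i)) {e : γ → α} (he : DenseRange e)
    (h : ∀ c, Cauchy (map (fun i => f i (e c)) l)) (z : α) :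
    Cauchy (map (fun i => f i z) l) := by
  refine Metric.cauchy_iff.2 ⟨map_neBot, fun ε hε => ?_⟩
  obtain ⟨c, hc⟩ := he.exists_dist_lt z (by positivity : 0 < ε / 4)
  obtain ⟨t, ht, htε⟩ := (Metric.cauchy_iff.1 (h c)).2 (ε / 2) (by positivity)
  refine ⟨(fun i => f i z) '' ((fun i => f i (e c)) ⁻¹' t), image_mem_map ht, ?_⟩
  rintro _ ⟨i, hi, rfl⟩ _ ⟨j, hj, rfl⟩
  have hi' : dist (f i z) (f i (e c)) ≤ dist z (e c) := by
    simpa using (hf i).dist_le_mul z (e c)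
  have hj' : dist (f j (e c)) (f j z) ≤ dist z (e c) := by
    simpa [dist_comm] using (hf j).dist_le_mul z (e c)
  calc dist (f i z) (f j z)
      ≤ dist (f i z) (f i (e c)) + dist (f i (e c)) (f j (e c)) + dist (f j (e c)) (f j z) :=
        dist_triangle4 _ _ _ _
    _ < ε := by linarith [htε _ hi _ hj]

section IsometryGroup

variable {X : Type*} [MetricSpace X] {ι : Type*} {l : Filter ι}

theorem tendsto_isometryEquiv_nhds_iff {f : ι → X ≃ᵢ X} {g : X ≃ᵢ X} :
    Tendsto f l (𝓝 g) ↔ ∀ x, Tendsto (fun i => f i x) l (𝓝 (g x)) := by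
  rw [nhds_induced, tendsto_comap_iff, tendsto_pi_nhds]
  rfl

theorem continuous_isometryEquiv_apply (x : X) : Continuous fun g : X ≃ᵢ X => g x :=
  (continuous_apply x).comp continuous_induced_dom

theorem tendsto_symm_apply_of_tendsto_apply {g : ι → X ≃ᵢ X} {a b : X}
    (h : Tendsto (fun i => g i a) l (𝓝 b)) : Tendsto (fun i => (g i).symm b) l (𝓝 a) := by
  rw [tendsto_iff_dist_tendsto_zero] at h ⊢
  refine h.congr fun i => ?_
  rw [← (g i).dist_eq ((g i).symm b) a, IsometryEquiv.apply_symm_apply, dist_comm]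

theorem continuous_isometryEquiv_symm : Continuous fun g : X ≃ᵢ X => g.symm := by
  refine continuous_induced_rng.2 <| continuous_pi fun x =>
    continuous_iff_continuousAt.2 fun g => ?_
  have h := tendsto_symm_apply_of_tendsto_apply
    ((continuous_isometryEquiv_apply (g.symm x)).tendsto g)
  rwa [g.apply_symm_apply] at h

theorem DivergentNet.isometryEquiv_symm {κ : Type*} [Preorder κ] {g : κ → X ≃ᵢ X}
    (hg : DivergentNet g) : DivergentNet fun i => (g i).symm := fun k hk => hg k.symm <| by
  simpa [Function.comp_def] using hk.continuousAt_comp continuous_isometryEquiv_symm.continuousAt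

theorem exists_tendsto_of_tendsto_apply_of_tendsto_symm_apply [l.NeBot] {g : ι → X ≃ᵢ X}
    (hg : ∀ x, ∃ a, Tendsto (fun i => g i x) l (𝓝 a))
    (hg' : ∀ x, ∃ b, Tendsto (fun i => (g i).symm x) l (𝓝 b)) :
    ∃ W : X ≃ᵢ X, Tendsto g l (𝓝 W) := by
  choose w hw using hg
  choose v hv using hg'
  have hwv : Function.RightInverse v w := fun x =>
    tendsto_nhds_unique (hw (v x)) (by simpa using tendsto_symm_apply_of_tendsto_apply (hv x))
  have hvw : Function.LeftInverse v w := fun x =>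
    tendsto_nhds_unique (hv (w x)) (tendsto_symm_apply_of_tendsto_apply (hw x))
  have hiso : Isometry w := Isometry.of_dist_eq fun a b =>
    tendsto_nhds_unique ((hw a).dist (hw b)) (by simp only [IsometryEquiv.dist_eq]; exact tendsto_const_nhds)
  exact ⟨⟨⟨w, v, hvw, hwv⟩, hiso⟩, tendsto_isometryEquiv_nhds_iff.2 hw⟩

end IsometryGroup

section Completion

variable {X : Type*} [MetricSpace X] {ι : Type*} {l : Filter ι}

theorem hatIso_coe (g : X ≃ᵢ X) (x : X) : hatIso g x = ↑(g x) :=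
  Completion.map_coe g.isometry.uniformContinuous x

theorem tendsto_coe_completion_iff {f : ι → X} {y : X} :
    Tendsto (fun i => (f i : Completion X)) l (𝓝 ↑y) ↔ Tendsto f l (𝓝 y) :=
  (Completion.isUniformEmbedding_coe X).isUniformInducing.isInducing.tendsto_nhds_iff.symm

theorem exists_mem_ellis_tendsto [l.NeBot] (g : ι → X ≃ᵢ X)
    (hg : ∀ x : X, Cauchy (map (fun i => g i x) l)) :
    ∃ h ∈ Ellis X, ∀ z, Tendsto (fun i => hatIso (g i) z) l (𝓝 (h z)) := by
  have hcauchy : ∀ z, Cauchy (map (fun i => hatIso (g i) z) l) :=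
    cauchy_map_apply_of_denseRange (fun i => (g i).isometry.completion_map.lipschitz)
      Completion.denseRange_coe fun x => by
        simpa only [hatIso_coe, map_map, Function.comp_def] using
          (hg x).map (Completion.uniformContinuous_coe X)
  choose h hh using fun z => cauchy_map_iff_exists_tendsto.1 (hcauchy z)
  exact ⟨h, mem_closure_of_tendsto (tendsto_pi_nhds.2 hh)
    (Eventually.of_forall fun i => mem_range_self (g i)), hh⟩

theorem exists_seq_tendsto_of_mem_ellis {h : Completion X → Completion X} (hh : h ∈ Ellis X)
    (a b : Completion X) : ∃ c : ℕ → X ≃ᵢ X,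
      Tendsto (fun n => hatIso (c n) a) atTop (𝓝 (h a)) ∧
      Tendsto (fun n => hatIso (c n) b) atTop (𝓝 (h b)) := by
  have hab : (h a, h b) ∈ closure (range fun g : X ≃ᵢ X => (hatIso g a, hatIso g b)) :=
    map_mem_closure (f := fun f : Completion X → Completion X => (f a, f b))
      ((continuous_apply a).prodMk (continuous_apply b)) hh
      (by rintro _ ⟨g, rfl⟩; exact mem_range_self g)
  obtain ⟨u, hu, hlim⟩ := mem_closure_iff_seq_limit.1 hab
  choose c hc using hu
  obtain rfl : u = _ := funext fun n => (hc n).symm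
  exact ⟨c, (Prod.tendsto_iff _ _).1 hlim⟩

end Completion

section CauchyIndivisible

variable {X : Type u} [MetricSpace X]

theorem exists_tendsto_apply_of_divergentNet (hCI : IsoCauchyIndivisible.{u, v} X)
    (hdich : EllisDichotomy X) {κ : Type v} [Nonempty κ] [Preorder κ] [IsDirected κ (· ≤ ·)]
    {g : κ → X ≃ᵢ X} (hg : DivergentNet g) {x y : X}
    (hxy : Tendsto (fun i => g i x) atTop (𝓝 y)) (z : X) :
    ∃ a, Tendsto (fun i => g i z) atTop (𝓝 a) := by
  obtain ⟨h, hE, hh⟩ := exists_mem_ellis_tendsto g (hCI κ g hg ⟨x, hxy.cauchy_map⟩)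
  have hcoe : ∀ x', Tendsto (fun i => (g i x' : Completion X)) atTop (𝓝 (h x')) := fun x' => by
    simpa only [hatIso_coe] using hh x'
  rcases hdich h hE with hin | hout
  · obtain ⟨a, ha⟩ := hin z
    exact ⟨a, tendsto_coe_completion_iff.1 (ha ▸ hcoe z)⟩
  · exact absurd ⟨y, tendsto_nhds_unique
      (((Completion.continuous_coe X).tendsto y).comp hxy) (hcoe x)⟩ (hout x)

theorem exists_mapClusterPt_of_tendsto_apply (hCI : IsoCauchyIndivisible.{u, v} X)
    (hdich : EllisDichotomy X) {c : ℕ → X ≃ᵢ X} {x y : X}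
    (hc : Tendsto (fun n => c n x) atTop (𝓝 y)) :
    ∃ k : X ≃ᵢ X, k x = y ∧ MapClusterPt k atTop c := by
  suffices ∃ k, MapClusterPt k atTop c by
    obtain ⟨k, hk⟩ := this
    exact ⟨k, (hk.continuousAt_comp (continuous_isometryEquiv_apply x).continuousAt).eq_of_tendsto
      hc, hk⟩
  by_contra! hdiv
  set g : ULift.{v} ℕ → X ≃ᵢ X := fun i => c i.down
  have hg : DivergentNet g := fun k hk => hdiv k (hk.of_comp tendsto_uliftDown_atTop)
  have hfwd := exists_tendsto_apply_of_divergentNet hCI hdich hg (hc.comp tendsto_uliftDown_atTop)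
  obtain ⟨w, hw⟩ := hfwd x
  have hbwd := exists_tendsto_apply_of_divergentNet hCI hdich hg.isometryEquiv_symm
    (tendsto_symm_apply_of_tendsto_apply hw)
  obtain ⟨W, hW⟩ := exists_tendsto_of_tendsto_apply_of_tendsto_symm_apply hfwd hbwd
  exact hg W hW.mapClusterPt

theorem isCompact_image_apply_setOf_apply_eq (hCI : IsoCauchyIndivisible.{u, v} X)
    (hdich : EllisDichotomy X) (x y z : X) :
    IsCompact ((fun k : X ≃ᵢ X => k z) '' {k | k x = y}) := by
  refine IsSeqCompact.isCompact fun u hu => ?_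
  choose k hkx hkz using hu
  obtain ⟨k₀, hk₀x, hk₀⟩ := exists_mapClusterPt_of_tendsto_apply hCI hdich (c := k) (x := x)
    (tendsto_const_nhds.congr fun n => Eq.symm (hkx n))
  obtain ⟨φ, hφ, hlim⟩ :=
    (hk₀.continuousAt_comp (continuous_isometryEquiv_apply z).continuousAt).tendsto_subseq
  exact ⟨k₀ z, ⟨k₀, hk₀x, rfl⟩, φ, hφ, by simpa only [Function.comp_def, hkz] using hlim⟩

theorem isCompact_setOf_apply_eq (hCI : IsoCauchyIndivisible.{u, v} X)
    (hdich : EllisDichotomy X) (x y : X) : IsCompact {k : X ≃ᵢ X | k x = y} := by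
  rw [isCompact_iff_ultrafilter_le_nhds]
  intro 𝒰 h𝒰
  have hC : {k : X ≃ᵢ X | k x = y} ∈ 𝒰 := le_principal_iff.1 h𝒰
  have hfwd : ∀ z, ∃ a, Tendsto (fun k : X ≃ᵢ X => k z) 𝒰 (𝓝 a) := fun z => by
    obtain ⟨a, -, ha⟩ := (isCompact_image_apply_setOf_apply_eq hCI hdich x y z).ultrafilter_le_nhds
      (𝒰.map _) (le_principal_iff.2 (image_mem_map hC))
    exact ⟨a, ha⟩
  have hbwd : ∀ z, ∃ b, Tendsto (fun k : X ≃ᵢ X => k.symm z) 𝒰 (𝓝 b) := fun z => by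
    have hsub : (fun k : X ≃ᵢ X => k.symm z) '' {k | k x = y} ⊆
        (fun k : X ≃ᵢ X => k z) '' {k | k y = x} := by
      rintro _ ⟨k, hk, rfl⟩
      exact ⟨k.symm, k.symm_apply_eq.2 hk.symm, rfl⟩
    obtain ⟨b, -, hb⟩ := (isCompact_image_apply_setOf_apply_eq hCI hdich y x z).ultrafilter_le_nhds
      (𝒰.map _) (le_principal_iff.2 (mem_of_superset (image_mem_map hC) hsub))
    exact ⟨b, hb⟩
  obtain ⟨W, hW⟩ := exists_tendsto_of_tendsto_apply_of_tendsto_symm_apply (g := id) hfwd hbwd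
  exact ⟨W, (isClosed_eq (continuous_isometryEquiv_apply x) continuous_const).mem_of_tendsto hW hC,
    hW⟩

theorem exists_clusterPt_of_tendsto_apply (hCI : IsoCauchyIndivisible.{u, v} X)
    (hdich : EllisDichotomy X) {F : Filter (X ≃ᵢ X)} [F.NeBot] {x y : X}
    (hF : Tendsto (fun k : X ≃ᵢ X => k x) F (𝓝 y)) : ∃ k, ClusterPt k F := by
  by_contra! hnone
  obtain ⟨U, hU, B, hB, hUB⟩ := Filter.disjoint_iff.1 <|
    (isCompact_setOf_apply_eq hCI hdich x y).disjoint_nhdsSet_left.2 fun k _ => by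
      simpa [clusterPt_iff_not_disjoint] using hnone k
  -- unlike `F`, this filter is countably generated, so a sequence tends to it
  set G := comap (fun k : X ≃ᵢ X => k x) (𝓝 y) ⊓ 𝓟 B
  have : G.NeBot := ‹F.NeBot›.mono (le_inf hF.le_comap (le_principal_iff.2 hB))
  obtain ⟨c, hc⟩ := exists_seq_tendsto G
  rw [tendsto_inf, tendsto_comap_iff, tendsto_principal] at hc
  obtain ⟨k, hkx, hk⟩ := exists_mapClusterPt_of_tendsto_apply hCI hdich hc.1
  obtain ⟨n, hnU, hnB⟩ :=
    ((hk.frequently (mem_nhdsSet_iff_forall.1 hU k hkx)).and_eventually hc.2).exists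
  exact Set.disjoint_left.1 hUB hnU hnB

theorem isoProperLimits_of_ellisDichotomy (hCI : IsoCauchyIndivisible.{u, v} X)
    (hdich : EllisDichotomy X) : IsoProperLimits.{u, w} X := by
  intro ι _ _ _ g hg x y hxy
  obtain ⟨k, hk⟩ :=
    exists_clusterPt_of_tendsto_apply hCI hdich (F := map g atTop) (tendsto_map'_iff.2 hxy)
  exact hg k hk

theorem ellisDichotomy_of_isoProperLimits (hproper : IsoProperLimits.{u, w} X) :
    EllisDichotomy X := by
  intro h hh
  by_contra! hmixed
  obtain ⟨⟨x₂, hx₂⟩, x₁, y, hy⟩ := hmixed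
  obtain ⟨c, hc₁, hc₂⟩ := exists_seq_tendsto_of_mem_ellis hh x₁ x₂
  simp only [hatIso_coe] at hc₁ hc₂
  rw [← hy, tendsto_coe_completion_iff] at hc₁
  refine hproper (ULift.{w} ℕ) (fun i => c i.down) (fun k hk => hx₂ ⟨k x₂, ?_⟩) x₁ y
    (hc₁.comp tendsto_uliftDown_atTop)
  exact (hk.continuousAt_comp ((Completion.continuous_coe X).comp
    (continuous_isometryEquiv_apply x₂)).continuousAt).eq_of_tendsto
      (hc₂.comp tendsto_uliftDown_atTop)

end CauchyIndivisible

/-- For a Cauchy-indivisible action `(Iso(X), X)`: the action is proper iff every `h`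
in the pointwise closure of the lifted group `{ĝ}` in `C(X̂, X̂)` satisfies
`h(X) ⊆ X` or `h(X) ⊆ X̂ \\ X`. -/
theorem isoProper_iff_closure_dichotomy (X : Type*) [MetricSpace X]
    (hCI : IsoCauchyIndivisible X) :
    IsoProperLimits X ↔
      ∀ h ∈ Ellis X,
        (∀ x : X, h (x : Completion X) ∈ Set.range ((↑) : X → Completion X)) ∨
        (∀ x : X, h (x : Completion X) ∉ Set.range ((↑) : X → Completion X)) :=
  ⟨ellisDichotomy_of_isoProperLimits, isoProperLimits_of_ellisDichotomy hCI⟩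

end
end

section
/- Let (X,d) be a separable metric space. If for every sequence {g_n} in Iso(X) with no convergent subsequence in Iso(X) such that {g_n x} is a Cauchy sequence for some x ∈ X, the sequence {g_n x} is Cauchy for every x ∈ X, then the action (Iso(X),X) is Cauchy-indivisible (i.e., the same conclusion holds for arbitrary nets in place of sequences). -/
open Filter Topology Set UniformSpace

noncomputable section

/-!
Since isometries are equicontinuous, the pointwise topology of `Iso(X)` is already determined by
a countable dense subset of `X`, so `Iso(X)` is second countable, hence Lindelöf. Consequently the
absence of cluster points of a divergent net `g` (countably many open sets, each eventually
avoided, cover `Iso(X)`), the Cauchy property of `(g_i x)` and its failure for `(g_i y)` are all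
witnessed by countably many tails of the index set. A sequence of indices eventually inside each
of these tails, running alternately through pairs of indices on which `(g_i y)` oscillates, gives
a divergent sequence along which `(g_n x)` is Cauchy and `(g_n y)` is not.
-/

namespace IsometryEquiv

variable {X : Type*} [MetricSpace X]

theorem isInducing_restrict_of_dense {s : Set X} (hs : Dense s) :
    IsInducing fun (f : X ≃ᵢ X) (z : s) => f z := by
  set F := fun (f : X ≃ᵢ X) (z : s) => f z
  have hcont : Continuous F :=
    continuous_pi fun z => (continuous_apply (z : X)).comp continuous_induced_dom
  refine isInducing_iff_nhds.2 fun f => le_antisymm (hcont.tendsto f).le_comap ?_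
  rw [nhds_induced, ← tendsto_iff_comap, tendsto_pi_nhds]
  refine fun z => Metric.tendsto_nhds.2 fun ε hε => ?_
  obtain ⟨w, hw, hzw⟩ := hs.exists_dist_lt z (by positivity : 0 < ε / 3)
  have hw_tendsto : Tendsto (fun g : X ≃ᵢ X => g w) (comap F (𝓝 (F f))) (𝓝 (f w)) :=
    ((continuous_apply (⟨w, hw⟩ : s)).tendsto (F f)).comp tendsto_comap
  have hnear : ∀ᶠ g in comap F (𝓝 (F f)), dist (g w) (f w) < ε / 3 :=
    Metric.tendsto_nhds.1 hw_tendsto _ (by positivity)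
  filter_upwards [hnear] with g hg
  calc dist (g z) (f z) ≤ dist (g z) (g w) + dist (g w) (f w) + dist (f w) (f z) :=
        dist_triangle4 _ _ _ _
    _ = dist z w + dist (g w) (f w) + dist z w := by
        rw [g.dist_eq, f.dist_eq, dist_comm w]
    _ < ε := by linarith

instance [TopologicalSpace.SeparableSpace X] : SecondCountableTopology (X ≃ᵢ X) := by
  obtain ⟨s, hsc, hs⟩ := TopologicalSpace.exists_countable_dense X
  have := hsc.to_subtype
  exact (isInducing_restrict_of_dense hs).secondCountableTopology

end IsometryEquiv

section

variable {ι G : Type*} [TopologicalSpace G]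

theorem exists_isCountablyGenerated_ge_forall_not_mapClusterPt [LindelofSpace G]
    {l : Filter ι} {g : ι → G} (hg : ∀ h, ¬MapClusterPt h l g) :
    ∃ L : Filter ι, L.IsCountablyGenerated ∧ l ≤ L ∧ ∀ h, ¬MapClusterPt h L g := by
  have hU : ∀ h, ∃ U : Set G, h ∈ U ∧ IsOpen U ∧ ∀ᶠ i in l, g i ∉ U := by
    intro h
    simpa [(nhds_basis_opens h).mapClusterPt_iff_frequently] using hg h
  choose U hhU hUo hlU using hU
  obtain ⟨t, htc, hcover⟩ :=
    LindelofSpace.elim_nhds_subcover U fun h => (hUo h).mem_nhds (hhU h)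
  have := htc.to_subtype
  refine ⟨⨅ h : t, 𝓟 (g ⁻¹' (U h)ᶜ), inferInstance,
    le_iInf fun h => le_principal_iff.2 (hlU h), fun h' hcl => ?_⟩
  obtain ⟨h, ht, hh'⟩ := mem_iUnion₂.1 (hcover ▸ mem_univ h')
  have hfreq := (mapClusterPt_iff_frequently.1 hcl) _ ((hUo h).mem_nhds hh')
  have hev : ∀ᶠ i in ⨅ h : t, 𝓟 (g ⁻¹' (U h)ᶜ), g i ∉ U h :=
    mem_iInf_of_mem ⟨h, ht⟩ (mem_principal_self _)
  obtain ⟨i, hin, hout⟩ := (hfreq.and_eventually hev).exists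
  exact hout hin

theorem divergentSeq_comp_of_tendsto {g : ι → G} {L : Filter ι}
    (hg : ∀ h, ¬MapClusterPt h L g) {c : ℕ → ι} (hc : Tendsto c atTop L) :
    DivergentSeq (g ∘ c) := fun _ hφ h hlim =>
  hg h <| ClusterPt.mono hlim.mapClusterPt <| tendsto_map.comp (hc.comp hφ.tendsto_atTop)

end

section

variable {α β : Type*} [UniformSpace β] {f : α → β}

theorem Cauchy.exists_isCountablyGenerated_ge [(uniformity β).IsCountablyGenerated] {l : Filter α}
    (hf : Cauchy (map f l)) :
    ∃ L : Filter α, L.IsCountablyGenerated ∧ l ≤ L ∧ Cauchy (map f L) := by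
  obtain ⟨V, hV⟩ := (uniformity β).exists_antitone_basis
  obtain ⟨hl, hpairs⟩ := cauchy_map_iff.1 hf
  have hs : ∀ n, ∃ s ∈ l, s ×ˢ s ⊆ (fun p : α × α => (f p.1, f p.2)) ⁻¹' V n :=
    fun n => mem_prod_self_iff.1 (hpairs (hV.mem n))
  choose s hsl hsV using hs
  have hle : l ≤ ⨅ n, 𝓟 (s n) := le_iInf fun n => le_principal_iff.2 (hsl n)
  refine ⟨⨅ n, 𝓟 (s n), inferInstance, hle, cauchy_map_iff.2 ⟨hl.mono hle, ?_⟩⟩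
  refine hV.tendsto_right_iff.2 fun n _ => mem_of_superset ?_ (hsV n)
  have hsn : s n ∈ ⨅ n, 𝓟 (s n) := mem_iInf_of_mem n (mem_principal_self _)
  exact prod_mem_prod hsn hsn

theorem Cauchy.cauchySeq_comp {L : Filter α} (hf : Cauchy (map f L)) {c : ℕ → α}
    (hc : Tendsto c atTop L) : CauchySeq (f ∘ c) := by
  rw [CauchySeq, ← map_map]
  exact hf.mono (map_mono hc)

theorem exists_seq_tendsto_not_cauchySeq {L : Filter α} [L.IsCountablyGenerated] [L.NeBot]
    (hf : ¬Cauchy (map f L)) : ∃ c : ℕ → α, Tendsto c atTop L ∧ ¬CauchySeq (f ∘ c) := by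
  rw [cauchy_map_iff, not_and, tendsto_iff_seq_tendsto] at hf
  push Not at hf
  obtain ⟨p, hp, hfar⟩ := hf inferInstance
  let c : ℕ → α := fun n => if n % 2 = 0 then (p (n / 2)).1 else (p (n / 2)).2
  have hc_even : ∀ n, c (2 * n) = (p n).1 := fun n => by simp [c]
  have hc_odd : ∀ n, c (2 * n + 1) = (p n).2 := fun n => by
    simp only [c]; rw [if_neg (by omega), show (2 * n + 1) / 2 = n by omega]
  refine ⟨c, fun t ht => ?_, fun hcauchy => hfar ?_⟩
  · rw [mem_map]
    filter_upwards [(hp.comp (Nat.tendsto_div_const_atTop two_ne_zero)).eventually_mem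
      (prod_mem_prod ht ht)] with n hn
    show c n ∈ t
    simp only [c]
    split_ifs
    exacts [hn.1, hn.2]
  · have hpairs : Tendsto (fun n => (2 * n, 2 * n + 1)) atTop atTop := by
      rw [← prod_atTop_atTop_eq]
      exact (tendsto_atTop_mono (fun n : ℕ => (by omega : n ≤ 2 * n)) tendsto_id).prodMk
        (tendsto_atTop_mono (fun n : ℕ => (by omega : n ≤ 2 * n + 1)) tendsto_id)
    convert (cauchySeq_iff_tendsto.1 hcauchy).comp hpairs using 1
    ext n <;> simp [hc_even, hc_odd]

end

/-- For a separable metric space, the sequential form of Cauchy-indivisibility for the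
evaluation action of `Iso(X)` implies the full (net) form. -/
theorem isoCauchyIndivisible_of_seq (X : Type*) [MetricSpace X]
    [TopologicalSpace.SeparableSpace X]
    (hseq : ∀ g : ℕ → X ≃ᵢ X, DivergentSeq g →
      (∃ x : X, CauchySeq fun n => g n x) → ∀ y : X, CauchySeq fun n => g n y) :
    IsoCauchyIndivisible X := by
  intro ι _ _ _ g hdiv hx y
  obtain ⟨x, hx⟩ := hx
  by_contra hy
  obtain ⟨L₁, _, hle₁, hL₁⟩ := exists_isCountablyGenerated_ge_forall_not_mapClusterPt hdiv
  obtain ⟨L₂, _, hle₂, hL₂⟩ := hx.exists_isCountablyGenerated_ge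
  have hle : atTop ≤ L₁ ⊓ L₂ := le_inf hle₁ hle₂
  have : (L₁ ⊓ L₂).NeBot := atTop_neBot.mono hle
  obtain ⟨c, hc, hcy⟩ := exists_seq_tendsto_not_cauchySeq (f := fun i => g i y)
    fun hL => hy (hL.mono (map_mono hle))
  exact hcy <| hseq (g ∘ c) (divergentSeq_comp_of_tendsto hL₁ (hc.mono_right inf_le_left))
    ⟨x, hL₂.cauchySeq_comp (hc.mono_right inf_le_right)⟩ y

end
end

section
/- Let (X,d) be a separable metric space such that the action (Iso(X),X) is Cauchy-indivisible, and let {g_n} be a sequence in Iso(X) with no convergent subsequence in Iso(X) such that {g_n x} is a Cauchy sequence in X for some x ∈ X. Then: (i) {g_n x_n} is a Cauchy sequence in X for every Cauchy sequence {x_n} in X; (ii) for every Cauchy sequence {x_k} in X, the sequence {ĝ_n [x_k]} converges in X̂ to [g_k x_k]. -/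
open Filter Topology Set UniformSpace

noncomputable section

/-! Separability turns a divergent sequence of isometries into a divergent net, so
Cauchy-indivisibility makes every orbit `(g_n y)` Cauchy. The `g_n` and their extensions `ĝ_n`
are uniformly equicontinuous, so Cauchyness passes to `(g_n x_n)`, and
`d(ĝ_n ξ, g_n x_n) = d(ξ, x_n) → 0` gives (ii). -/

lemma IsometryEquiv.tendsto_nhds_iff_pointwise {X ι : Type*} [MetricSpace X] {l : Filter ι}
    {u : ι → X ≃ᵢ X} {h : X ≃ᵢ X} :
    Tendsto u l (𝓝 h) ↔ ∀ y, Tendsto (fun i => u i y) l (𝓝 (h y)) := by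
  rw [nhds_induced, tendsto_comap_iff, tendsto_pi_nhds]
  rfl

/-- On a separable space, pointwise convergence of isometries is tested on a countable dense
set, where the topology is first countable; equicontinuity spreads the limit to the closure. -/
theorem IsometryEquiv.exists_strictMono_tendsto_of_mapClusterPt {X : Type*} [MetricSpace X]
    [TopologicalSpace.SeparableSpace X] {u : ℕ → X ≃ᵢ X} {h : X ≃ᵢ X}
    (hu : MapClusterPt h atTop u) : ∃ φ : ℕ → ℕ, StrictMono φ ∧ Tendsto (u ∘ φ) atTop (𝓝 h) := by
  obtain ⟨s, hs_count, hs_dense⟩ := TopologicalSpace.exists_countable_dense X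
  have : Countable s := hs_count.to_subtype
  let restrict : (X ≃ᵢ X) → (s → X) := fun f y => f y
  have hrestrict : Continuous restrict :=
    continuous_pi fun y => (continuous_apply (y : X)).comp continuous_induced_dom
  obtain ⟨φ, hφ, hlim_s⟩ :=
    (hu.continuousAt_comp hrestrict.continuousAt).tendsto_subseq
  refine ⟨φ, hφ, IsometryEquiv.tendsto_nhds_iff_pointwise.2 fun y => ?_⟩
  have hequi : Equicontinuous fun n => (u (φ n) : X → X) :=
    (LipschitzWith.uniformEquicontinuous _ 1 fun n => (u (φ n)).isometry.lipschitz).equicontinuous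
  have hclosed := hequi.isClosed_setOfPred_tendsto (l := atTop) h.continuous
  have hs_sub : s ⊆ {y | Tendsto (fun n => u (φ n) y) atTop (𝓝 (h y))} :=
    fun y hy => tendsto_pi_nhds.1 hlim_s ⟨y, hy⟩
  exact hclosed.closure_subset_iff.2 hs_sub (hs_dense y)

theorem DivergentSeq.divergentNet {X : Type*} [MetricSpace X] [TopologicalSpace.SeparableSpace X]
    {g : ℕ → X ≃ᵢ X} (hg : DivergentSeq g) : DivergentNet g := fun h hh =>
  let ⟨φ, hφ, hlim⟩ := IsometryEquiv.exists_strictMono_tendsto_of_mapClusterPt hh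
  hg φ hφ h hlim

lemma map_atTop_comp_uliftDown {α : Type*} (f : ℕ → α) :
    map (fun i : ULift ℕ => f i.down) atTop = map f atTop := by
  rw [← (ULift.orderIso : ULift ℕ ≃o ℕ).map_atTop, Filter.map_map]
  rfl

theorem IsoCauchyIndivisible.cauchySeq_apply_s6 {X : Type*} [MetricSpace X]
    (hCI : IsoCauchyIndivisible X) {g : ℕ → X ≃ᵢ X} (hg : DivergentNet g) {x : X}
    (hx : CauchySeq fun n => g n x) (y : X) : CauchySeq fun n => g n y := by
  have hg' : DivergentNet fun i : ULift ℕ => g i.down := fun h hh =>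
    hg h (by rwa [MapClusterPt, map_atTop_comp_uliftDown] at hh)
  have hx' : Cauchy (map (fun i : ULift ℕ => g i.down x) atTop) := by
    rwa [map_atTop_comp_uliftDown fun n => g n x]
  have := hCI (ULift ℕ) (fun i => g i.down) hg' ⟨x, hx'⟩ y
  rwa [map_atTop_comp_uliftDown fun n => g n y] at this

theorem UniformEquicontinuous.cauchySeq_apply_s6 {α β : Type*} [UniformSpace α] [UniformSpace β]
    {F : ℕ → α → β} (hF : UniformEquicontinuous F) (hpt : ∀ a, CauchySeq fun n => F n a)
    {u : ℕ → α} (hu : CauchySeq u) : CauchySeq fun n => F n (u n) := by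
  rw [cauchySeq_iff] at hu ⊢
  intro V hV
  obtain ⟨W, hW, -, hWV⟩ := comp_comp_symm_mem_uniformity_sets hV
  obtain ⟨N, hN⟩ := hu _ (hF W hW)
  obtain ⟨M, hM⟩ := cauchySeq_iff.1 (hpt (u N)) W hW
  refine ⟨max N M, fun m hm n hn => hWV ?_⟩
  have hmN : (F m (u m), F m (u N)) ∈ W := hN m (le_of_max_le_left hm) N le_rfl m
  have hnN : (F n (u N), F n (u n)) ∈ W := hN N le_rfl n (le_of_max_le_left hn) n
  have hmn : (F m (u N), F n (u N)) ∈ W := hM m (le_of_max_le_right hm) n (le_of_max_le_right hn)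
  exact ⟨_, ⟨_, hmN, hmn⟩, hnN⟩

theorem EquicontinuousAt.tendsto_apply_of_tendsto {ι X α : Type*} [TopologicalSpace X]
    [UniformSpace α] {F : ι → X → α} {x : X} (hF : EquicontinuousAt F x) {l : Filter ι}
    {u : ι → X} (hu : Tendsto u l (𝓝 x)) {z : α} (hz : Tendsto (fun i => F i (u i)) l (𝓝 z)) :
    Tendsto (fun i => F i x) l (𝓝 z) :=
  hz.congr_uniformity (Filter.Tendsto.uniformity_symm fun U hU =>
    (hu.eventually (hF U hU)).mono fun i hi => hi i)

/-- Lemma 5.5: for a divergent sequence of isometries of a separable metric space with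
Cauchy-indivisible evaluation action such that `(g_n x)` is Cauchy for some `x`:
(i) `(g_n x_n)` is Cauchy for every Cauchy sequence `(x_n)`;
(ii) `ĝ_n [x_k] → [g_k x_k]` in `X̂` for every Cauchy sequence `(x_k)`. -/
theorem cauchySeq_apply_and_hat_tendsto (X : Type*) [MetricSpace X]
    [TopologicalSpace.SeparableSpace X] (hCI : IsoCauchyIndivisible X)
    (g : ℕ → X ≃ᵢ X) (hdiv : DivergentSeq g) (x : X)
    (hx : CauchySeq fun n => g n x) :
    (∀ xs : ℕ → X, CauchySeq xs → CauchySeq fun n => g n (xs n)) ∧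
    (∀ xs : ℕ → X, CauchySeq xs → ∀ ξ η : Completion X,
      Tendsto (fun k => ((xs k : X) : Completion X)) atTop (𝓝 ξ) →
      Tendsto (fun k => ((g k (xs k) : X) : Completion X)) atTop (𝓝 η) →
      Tendsto (fun n => hatIso (g n) ξ) atTop (𝓝 η)) := by
  have hpt : ∀ y, CauchySeq fun n => g n y := hCI.cauchySeq_apply_s6 hdiv.divergentNet hx
  have hequi : UniformEquicontinuous fun n => (g n : X → X) :=
    LipschitzWith.uniformEquicontinuous _ 1 fun n => (g n).isometry.lipschitz
  have hequi_hat : UniformEquicontinuous fun n => hatIso (g n) :=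
    LipschitzWith.uniformEquicontinuous _ 1 fun n => (g n).isometry.completion_map.lipschitz
  refine ⟨fun xs hxs => hequi.cauchySeq_apply_s6 hpt hxs, fun xs _ ξ η hξ hη => ?_⟩
  refine (hequi_hat.equicontinuous ξ).tendsto_apply_of_tendsto hξ ?_
  simpa only [hatIso, Completion.map_coe (g _).isometry.uniformContinuous] using hη

end
end
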